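/- Assume additionally that p j ≤ 1 for every job j. Then any sequence of schedules σ_0, σ_1, …, σ_T in which each step is an improving k-swap has length T ≤ ((m · n) / (2 · δ_min) + 1) · (m · N + 1), where N is the number of ordered pairs (A, B) of disjoint finsets of the n jobs with |A| ≥ 1 and |A| + |B| ≤ k. -/

import Mathlib

open Finset

/-- The load of machine `i` under schedule `σ` with processing times `p`. -/
noncomputable def load {n m : ℕ} (p : Fin n → ℝ) (σ : Fin n → Fin m) (i : Fin m) : ℝ :=
  ∑ j ∈ Finset.univ.filter (fun j => σ j = i), p j

/-- The makespan (maximum machine load) of schedule `σ`. -/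
noncomputable def Lmax {n m : ℕ} (p : Fin n → ℝ) (σ : Fin n → Fin m) : ℝ :=
  ⨆ i, load p σ i

/-- `δ_min`: the minimum of `|p(A) - p(B)|` over disjoint finsets of jobs `A`, `B`
with `1 ≤ |A| + |B| ≤ k`. -/
noncomputable def deltaMin (n k : ℕ) (p : Fin n → ℝ) : ℝ :=
  sInf { x | ∃ A B : Finset (Fin n), Disjoint A B ∧ 1 ≤ A.card + B.card ∧
    A.card + B.card ≤ k ∧ x = |∑ j ∈ A, p j - ∑ j ∈ B, p j| }

/-- An improving `k`-swap from `σ` to `σ'`, with critical machine `i`, machine `i' ≠ i`,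
and disjoint job sets `A ⊆ σ⁻¹ {i}`, `B ⊆ σ⁻¹ {i'}` with `|A| ≥ 1`, `|A| + |B| ≤ k` and
`0 < p(A) - p(B) < L_i(σ) - L_{i'}(σ)`; `σ'` sends `A` to `i'`, `B` to `i`, and agrees
with `σ` elsewhere. -/
def IsImprovingKSwap (k : ℕ) {n m : ℕ} (p : Fin n → ℝ) (σ σ' : Fin n → Fin m)
    (i i' : Fin m) (A B : Finset (Fin n)) : Prop :=
  load p σ i = Lmax p σ ∧
  i' ≠ i ∧
  Disjoint A B ∧
  (∀ j ∈ A, σ j = i) ∧ (∀ j ∈ B, σ j = i') ∧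
  1 ≤ A.card ∧ A.card + B.card ≤ k ∧
  0 < (∑ j ∈ A, p j) - ∑ j ∈ B, p j ∧
  (∑ j ∈ A, p j) - (∑ j ∈ B, p j) < load p σ i - load p σ i' ∧
  (∀ j ∈ A, σ' j = i') ∧ (∀ j ∈ B, σ' j = i) ∧
  ∀ j, j ∉ A → j ∉ B → σ' j = σ j

/-- The set `γ_s(σ)` of machines whose load is at most `L_max(σ) - δ_min`. -/
noncomputable def gammaS (k : ℕ) {n m : ℕ} (p : Fin n → ℝ) (σ : Fin n → Fin m) :
    Finset (Fin m) :=
  Finset.univ.filter (fun i => load p σ i ≤ Lmax p σ - deltaMin n k p)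

/-- The potential `Φ(σ) = ∑_{(i,i')} |L_i(σ) - L_{i'}(σ)|` over ordered pairs of machines. -/
noncomputable def potential {n m : ℕ} (p : Fin n → ℝ) (σ : Fin n → Fin m) : ℝ :=
  ∑ i : Fin m, ∑ i' : Fin m, |load p σ i - load p σ i'|


/-- The number of ordered pairs `(A, B)` of disjoint finsets of the `n` jobs with
`|A| ≥ 1` and `|A| + |B| ≤ k`. -/
noncomputable def numPairs (n k : ℕ) : ℕ :=
  ((Finset.univ : Finset (Finset (Fin n) × Finset (Fin n))).filter
    (fun AB => Disjoint AB.1 AB.2 ∧ 1 ≤ AB.1.card ∧ AB.1.card + AB.2.card ≤ k)).card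

section Aux

variable {n m k : ℕ} {p : Fin n → ℝ} {σ σ' : Fin n → Fin m} {i i' : Fin m}
  {A B : Finset (Fin n)}

private lemma sum_load (p : Fin n → ℝ) (σ : Fin n → Fin m) :
    ∑ i, load p σ i = ∑ j, p j := by
  unfold load
  exact Finset.sum_fiberwise _ _ _

private lemma load_le_Lmax [Nonempty (Fin m)] (p : Fin n → ℝ) (σ : Fin n → Fin m) (i : Fin m) :
    load p σ i ≤ Lmax p σ :=
  le_ciSup (Set.finite_range _).bddAbove i

private lemma Lmax_le [Nonempty (Fin m)] {c : ℝ} (h : ∀ i, load p σ i ≤ c) : Lmax p σ ≤ c :=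
  ciSup_le h

private lemma swap_filter_other (hs : IsImprovingKSwap k p σ σ' i i' A B) (x : Fin m)
    (hxi : x ≠ i) (hxi' : x ≠ i') :
    Finset.univ.filter (fun j => σ' j = x) = Finset.univ.filter (fun j => σ j = x) := by
  obtain ⟨-, -, hdisj, hA, hB, -, -, -, -, hA', hB', hoth⟩ := hs
  ext j
  simp only [Finset.mem_filter, Finset.mem_univ, true_and]
  by_cases hjA : j ∈ A
  · simp [hA' j hjA, hA j hjA, hxi.symm, hxi'.symm]
  · by_cases hjB : j ∈ B
    · simp [hB' j hjB, hB j hjB, hxi.symm, hxi'.symm]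
    · rw [hoth j hjA hjB]

private lemma swap_load_other (hs : IsImprovingKSwap k p σ σ' i i' A B) (x : Fin m)
    (hxi : x ≠ i) (hxi' : x ≠ i') : load p σ' x = load p σ x := by
  unfold load
  rw [swap_filter_other hs x hxi hxi']

private lemma swap_load_src (hs : IsImprovingKSwap k p σ σ' i i' A B) :
    load p σ' i = load p σ i - ((∑ j ∈ A, p j) - ∑ j ∈ B, p j) := by
  obtain ⟨-, hne, hdisj, hA, hB, -, -, -, -, hA', hB', hoth⟩ := hs
  have hfilt : Finset.univ.filter (fun j => σ' j = i)
      = (Finset.univ.filter (fun j => σ j = i)) \ A ∪ B := by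
    ext j
    simp only [Finset.mem_union, Finset.mem_sdiff, Finset.mem_filter, Finset.mem_univ, true_and]
    by_cases hjA : j ∈ A
    · rw [hA' j hjA]
      simp [hjA, Finset.disjoint_left.mp hdisj hjA, hne]
    · by_cases hjB : j ∈ B
      · simp [hB' j hjB, hjB]
      · rw [hoth j hjA hjB]; simp [hjA, hjB]
  have hAsub : A ⊆ Finset.univ.filter (fun j => σ j = i) := by
    intro j hj; simp [hA j hj]
  have hdisj2 : Disjoint ((Finset.univ.filter (fun j => σ j = i)) \ A) B := by
    apply Finset.disjoint_left.mpr
    intro j hj hjB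
    have := (Finset.mem_sdiff.mp hj).1
    have h1 : σ j = i := (Finset.mem_filter.mp this).2
    have h2 : σ j = i' := hB j hjB
    exact hne (h2 ▸ h1)
  unfold load
  rw [hfilt, Finset.sum_union hdisj2, Finset.sum_sdiff_eq_sub hAsub]
  ring

private lemma swap_load_tgt (hs : IsImprovingKSwap k p σ σ' i i' A B) :
    load p σ' i' = load p σ i' + ((∑ j ∈ A, p j) - ∑ j ∈ B, p j) := by
  obtain ⟨-, hne, hdisj, hA, hB, -, -, -, -, hA', hB', hoth⟩ := hs
  have hfilt : Finset.univ.filter (fun j => σ' j = i')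
      = (Finset.univ.filter (fun j => σ j = i')) \ B ∪ A := by
    ext j
    simp only [Finset.mem_union, Finset.mem_sdiff, Finset.mem_filter, Finset.mem_univ, true_and]
    by_cases hjB : j ∈ B
    · rw [hB' j hjB]
      simp [hjB, Finset.disjoint_right.mp hdisj hjB, hne.symm]
    · by_cases hjA : j ∈ A
      · simp [hA' j hjA, hjA]
      · rw [hoth j hjA hjB]; simp [hjA, hjB]
  have hBsub : B ⊆ Finset.univ.filter (fun j => σ j = i') := by
    intro j hj; simp [hB j hj]
  have hdisj2 : Disjoint ((Finset.univ.filter (fun j => σ j = i')) \ B) A := by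
    apply Finset.disjoint_left.mpr
    intro j hj hjA
    have := (Finset.mem_sdiff.mp hj).1
    have h1 : σ j = i' := (Finset.mem_filter.mp this).2
    have h2 : σ j = i := hA j hjA
    exact hne (h1.symm.trans h2)
  unfold load
  rw [hfilt, Finset.sum_union hdisj2, Finset.sum_sdiff_eq_sub hBsub]
  ring

end Aux

section Aux2

variable {n m k : ℕ} {p : Fin n → ℝ} {σ σ' : Fin n → Fin m} {i i' : Fin m}
  {A B : Finset (Fin n)}

private lemma swap_Lmax_le [Nonempty (Fin m)] (hs : IsImprovingKSwap k p σ σ' i i' A B) :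
    Lmax p σ' ≤ Lmax p σ := by
  apply Lmax_le
  intro x
  by_cases hxi : x = i
  · subst hxi
    rw [swap_load_src hs]
    have h1 := hs.2.2.2.2.2.2.2.2.1
    have := load_le_Lmax p σ x
    linarith [hs.2.2.2.2.2.2.2.2.1, hs.2.2.2.2.2.2.2.1]
  · by_cases hxi' : x = i'
    · subst hxi'
      rw [swap_load_tgt hs]
      have himp := hs.2.2.2.2.2.2.2.2.1
      have hcrit := hs.1
      have := load_le_Lmax p σ i
      linarith
    · rw [swap_load_other hs x hxi hxi']
      exact load_le_Lmax p σ x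

private lemma deltaMin_le_swap (hs : IsImprovingKSwap k p σ σ' i i' A B) :
    deltaMin n k p ≤ (∑ j ∈ A, p j) - ∑ j ∈ B, p j := by
  have hpos := hs.2.2.2.2.2.2.2.1
  have habs : (∑ j ∈ A, p j) - ∑ j ∈ B, p j = |(∑ j ∈ A, p j) - ∑ j ∈ B, p j| :=
    (abs_of_pos hpos).symm
  rw [habs]
  apply csInf_le
  · refine ⟨0, ?_⟩
    rintro x ⟨A', B', -, -, -, rfl⟩
    exact abs_nonneg _
  · exact ⟨A, B, hs.2.2.1, le_trans hs.2.2.2.2.2.1 (Nat.le_add_right _ _),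
      hs.2.2.2.2.2.2.1, rfl⟩

private lemma abs_pair_third (a b Δ c : ℝ) (hΔ : 0 ≤ Δ) (hba : Δ ≤ a - b) :
    |a - Δ - c| + |b + Δ - c| ≤ |a - c| + |b - c| := by
  rcases abs_cases (a - Δ - c) with ⟨h1, h1'⟩ | ⟨h1, h1'⟩ <;>
  rcases abs_cases (b + Δ - c) with ⟨h2, h2'⟩ | ⟨h2, h2'⟩ <;>
  rcases abs_cases (a - c) with ⟨h3, h3'⟩ | ⟨h3, h3'⟩ <;>
  rcases abs_cases (b - c) with ⟨h4, h4'⟩ | ⟨h4, h4'⟩ <;>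
  rw [h1, h2, h3, h4] <;> linarith

private lemma abs_pair_main (a b Δ D : ℝ) (hD : D ≤ Δ) (hmargin : D ≤ a - b - Δ) (hD0 : 0 ≤ D) :
    |a - Δ - (b + Δ)| ≤ |a - b| - 2 * D := by
  rcases abs_cases (a - Δ - (b + Δ)) with ⟨h1, h1'⟩ | ⟨h1, h1'⟩ <;>
  rcases abs_cases (a - b) with ⟨h2, h2'⟩ | ⟨h2, h2'⟩ <;>
  rw [h1, h2] <;> linarith

end Aux2


section Phi

variable {n m k : ℕ} {p : Fin n → ℝ} {σ σ' : Fin n → Fin m} {i i' : Fin m}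
  {A B : Finset (Fin n)}

private lemma load_nonneg (hp : ∀ j, 0 < p j) (σ : Fin n → Fin m) (i : Fin m) :
    0 ≤ load p σ i :=
  Finset.sum_nonneg fun j _ => (hp j).le

private lemma potential_nonneg (p : Fin n → ℝ) (σ : Fin n → Fin m) : 0 ≤ potential p σ :=
  Finset.sum_nonneg fun _ _ => Finset.sum_nonneg fun _ _ => abs_nonneg _

private lemma potential_le_two_mn (hp : ∀ j, 0 < p j) (hp1 : ∀ j, p j ≤ 1)
    (σ : Fin n → Fin m) : potential p σ ≤ 2 * m * n := by
  have hS : ∑ x, load p σ x ≤ (n : ℝ) := by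
    rw [sum_load]
    calc ∑ j, p j ≤ ∑ _j : Fin n, (1 : ℝ) := Finset.sum_le_sum fun j _ => hp1 j
    _ = n := by simp
  have h1 : potential p σ ≤ ∑ x : Fin m, ∑ y : Fin m, (load p σ x + load p σ y) := by
    apply Finset.sum_le_sum
    intro x _
    apply Finset.sum_le_sum
    intro y _
    have hx := load_nonneg hp σ x
    have hy := load_nonneg hp σ y
    rcases abs_cases (load p σ x - load p σ y) with ⟨h, -⟩ | ⟨h, -⟩ <;> rw [h] <;> linarith
  have h2 : ∑ x : Fin m, ∑ y : Fin m, (load p σ x + load p σ y)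
      = (m : ℝ) * (∑ x, load p σ x) + (m : ℝ) * (∑ x, load p σ x) := by
    have hinner : ∀ x : Fin m, ∑ y : Fin m, (load p σ x + load p σ y)
        = (m : ℝ) * load p σ x + ∑ y, load p σ y := by
      intro x
      rw [Finset.sum_add_distrib, Finset.sum_const, Finset.card_univ, Fintype.card_fin,
        nsmul_eq_mul]
    rw [Finset.sum_congr rfl (fun x _ => hinner x), Finset.sum_add_distrib,
      ← Finset.mul_sum, Finset.sum_const, Finset.card_univ, Fintype.card_fin, nsmul_eq_mul]
  have hm0 : (0 : ℝ) ≤ (m : ℝ) := Nat.cast_nonneg m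
  calc potential p σ ≤ (m : ℝ) * (∑ x, load p σ x) + (m : ℝ) * (∑ x, load p σ x) := by
        rw [← h2]; exact h1
    _ ≤ (m : ℝ) * n + (m : ℝ) * n := by
        have := mul_le_mul_of_nonneg_left hS hm0
        linarith
    _ = 2 * m * n := by ring

private lemma potential_step [Nonempty (Fin m)]
    (hs : IsImprovingKSwap k p σ σ' i i' A B) (D : ℝ) (hD0 : 0 ≤ D)
    (hDΔ : D ≤ (∑ j ∈ A, p j) - ∑ j ∈ B, p j)
    (hmargin : D ≤ (load p σ i - load p σ i') - ((∑ j ∈ A, p j) - ∑ j ∈ B, p j)) :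
    potential p σ' ≤ potential p σ - 4 * D := by
  classical
  have hne : i' ≠ i := hs.2.1
  set f := load p σ with hf
  set g := load p σ' with hg
  set Δ : ℝ := (∑ j ∈ A, p j) - ∑ j ∈ B, p j with hΔdef
  have hgi : g i = f i - Δ := swap_load_src hs
  have hgi' : g i' = f i' + Δ := swap_load_tgt hs
  have hgoth : ∀ x, x ≠ i → x ≠ i' → g x = f x := fun x h1 h2 => swap_load_other hs x h1 h2
  have hΔpos : 0 < Δ := hs.2.2.2.2.2.2.2.1
  have himp : Δ < f i - f i' := hs.2.2.2.2.2.2.2.2.1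
  set s : Finset (Fin m) := (Finset.univ.erase i).erase i' with hsdef
  have hsmem : ∀ c ∈ s, c ≠ i ∧ c ≠ i' := by
    intro c hc
    have h1 := Finset.mem_erase.mp hc
    have h2 := Finset.mem_erase.mp h1.2
    exact ⟨h2.1, h1.1⟩
  have hsplit : ∀ F : Fin m → ℝ, (∑ x, F x) = F i + F i' + ∑ x ∈ s, F x := by
    intro F
    rw [← Finset.add_sum_erase _ F (Finset.mem_univ i),
        ← Finset.add_sum_erase _ F (show i' ∈ Finset.univ.erase i by
          exact Finset.mem_erase.mpr ⟨hne, Finset.mem_univ i'⟩)]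
    ring
  have hexp : ∀ h : Fin m → ℝ, (∑ x, ∑ y, |h x - h y|) =
      (|h i - h i'| + |h i' - h i|)
      + (∑ c ∈ s, (|h i - h c| + |h i' - h c|))
      + (∑ c ∈ s, (|h c - h i| + |h c - h i'|))
      + (∑ x ∈ s, ∑ y ∈ s, |h x - h y|) := by
    intro h
    rw [hsplit (fun x => ∑ y, |h x - h y|)]
    rw [hsplit (fun y => |h i - h y|), hsplit (fun y => |h i' - h y|)]
    rw [Finset.sum_congr rfl (fun x (_ : x ∈ s) => hsplit (fun y => |h x - h y|))]
    rw [Finset.sum_add_distrib, Finset.sum_add_distrib]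
    simp only [sub_self, abs_zero]
    rw [show (∑ c ∈ s, (|h i - h c| + |h i' - h c|))
        = (∑ c ∈ s, |h i - h c|) + ∑ c ∈ s, |h i' - h c| from Finset.sum_add_distrib]
    ring
  have hPg : potential p σ' = ∑ x, ∑ y, |g x - g y| := rfl
  have hPf : potential p σ = ∑ x, ∑ y, |f x - f y| := rfl
  rw [hPg, hPf, hexp g, hexp f]
  -- term (i,i')
  have hB1 : |g i - g i'| ≤ |f i - f i'| - 2 * D := by
    rw [hgi, hgi']
    exact abs_pair_main (f i) (f i') Δ D hDΔ hmargin hD0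
  have hB1' : |g i' - g i| ≤ |f i' - f i| - 2 * D := by
    rw [abs_sub_comm (g i') (g i), abs_sub_comm (f i') (f i)]
    exact hB1
  -- terms with third machines
  have hB2 : ∀ c ∈ s, |g i - g c| + |g i' - g c| ≤ |f i - f c| + |f i' - f c| := by
    intro c hc
    obtain ⟨hci, hci'⟩ := hsmem c hc
    rw [hgi, hgi', hgoth c hci hci']
    exact abs_pair_third (f i) (f i') Δ (f c) hΔpos.le himp.le
  have hB2sum : ∑ c ∈ s, (|g i - g c| + |g i' - g c|)
      ≤ ∑ c ∈ s, (|f i - f c| + |f i' - f c|) :=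
    Finset.sum_le_sum hB2
  have hB3sum : ∑ c ∈ s, (|g c - g i| + |g c - g i'|)
      ≤ ∑ c ∈ s, (|f c - f i| + |f c - f i'|) := by
    apply Finset.sum_le_sum
    intro c hc
    rw [abs_sub_comm (g c) (g i), abs_sub_comm (g c) (g i'),
        abs_sub_comm (f c) (f i), abs_sub_comm (f c) (f i')]
    exact hB2 c hc
  have hB4 : (∑ x ∈ s, ∑ y ∈ s, |g x - g y|) = ∑ x ∈ s, ∑ y ∈ s, |f x - f y| := by
    apply Finset.sum_congr rfl
    intro x hx
    apply Finset.sum_congr rfl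
    intro y hy
    rw [hgoth x (hsmem x hx).1 (hsmem x hx).2, hgoth y (hsmem y hy).1 (hsmem y hy).2]
  linarith
end Phi


section Window

variable {n m k : ℕ}

private lemma Lmax_mono_range [Nonempty (Fin m)] {p : Fin n → ℝ} (σ : ℕ → Fin n → Fin m)
    (I I' : ℕ → Fin m) (Af Bf : ℕ → Finset (Fin n)) (u0 t2 : ℕ)
    (hsw : ∀ u, u0 ≤ u → u ≤ t2 → IsImprovingKSwap k p (σ u) (σ (u+1)) (I u) (I' u) (Af u) (Bf u)) :
    ∀ v, u0 ≤ v → v ≤ t2 + 1 → Lmax p (σ v) ≤ Lmax p (σ u0) := by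
  intro v hv hv2
  induction v, hv using Nat.le_induction with
  | base => exact le_rfl
  | succ v hv ih =>
    have hvt : v ≤ t2 := by omega
    exact le_trans (swap_Lmax_le (hsw v hv hvt)) (ih (by omega))

private lemma window_W_lt [Nonempty (Fin m)] {p : Fin n → ℝ}
    (σ : ℕ → Fin n → Fin m) (I I' : ℕ → Fin m) (Af Bf : ℕ → Finset (Fin n))
    (t1 t2 : ℕ) (h12 : t1 < t2)
    (hsw : ∀ u, t1 ≤ u → u ≤ t2 → IsImprovingKSwap k p (σ u) (σ (u+1)) (I u) (I' u) (Af u) (Bf u))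
    (htype1 : ∀ u, t1 ≤ u → u < t2 →
      Lmax p (σ (u+1)) - deltaMin n k p < load p (σ (u+1)) (I' u))
    (hA : Af t1 = Af t2) (hB : Bf t1 = Bf t2) :
    (Finset.univ.filter fun x => load p (σ t2) x ≤ load p (σ t2) (I' t2)).card
      < (Finset.univ.filter fun x => load p (σ t1) x ≤ load p (σ t1) (I' t1)).card := by
  classical
  set δ := deltaMin n k p with hδdef
  have hs1 := hsw t1 le_rfl h12.le
  have hs2 := hsw t2 h12.le le_rfl
  set Δ : ℝ := (∑ j ∈ Af t1, p j) - ∑ j ∈ Bf t1, p j with hΔdef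
  have hΔ2 : (∑ j ∈ Af t2, p j) - (∑ j ∈ Bf t2, p j) = Δ := by rw [← hA, ← hB]
  set b1 : ℝ := load p (σ t1) (I' t1) with hb1def
  set b2 : ℝ := load p (σ t2) (I' t2) with hb2def
  set ℓ : ℝ := load p (σ (t1+1)) (I' t1) with hℓdef
  have hℓval : ℓ = b1 + Δ := swap_load_tgt hs1
  have hδΔ : δ ≤ Δ := deltaMin_le_swap hs1
  have hv2 : load p (σ t2) (I t2) = Lmax p (σ t2) := hs2.1
  have himp2 : Δ < Lmax p (σ t2) - b2 := by
    have h := hs2.2.2.2.2.2.2.2.2.1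
    rw [hΔ2] at h
    rw [← hv2]
    exact h
  -- Step A : Lmax (σ t2) ≤ ℓ
  have hkey : ∀ u, t1 + 1 ≤ u → u ≤ t2 →
      (Lmax p (σ t2) ≤ ℓ) ∨ ((∀ j ∈ Af t1, σ u j = I' t1) ∧ load p (σ u) (I' t1) = ℓ) := by
    intro u hu hu2
    induction u, hu using Nat.le_induction with
    | base =>
      exact Or.inr ⟨fun j hj => hs1.2.2.2.2.2.2.2.2.2.1 j hj, rfl⟩
    | succ u hu ih =>
      have hu2' : u ≤ t2 := by omega
      rcases ih hu2' with hdone | ⟨hjobs, hload⟩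
      · exact Or.inl hdone
      · have hsu := hsw u (by omega) hu2'
        by_cases hIu : I u = I' t1
        · left
          have hLu : Lmax p (σ u) = ℓ := by rw [← hsu.1, hIu, hload]
          have hmono : Lmax p (σ t2) ≤ Lmax p (σ u) := by
            have := Lmax_mono_range σ I I' Af Bf u t2
              (fun w hw hw2 => hsw w (le_trans (by omega) hw) hw2) t2 hu2' (by omega)
            exact this
          rw [hLu] at hmono
          exact hmono
        · by_cases hI'u : I' u = I' t1
          · exfalso
            have himpu := hsu.2.2.2.2.2.2.2.2.1
            have hδu := deltaMin_le_swap hsu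
            have ht1' := htype1 t1 le_rfl h12
            have hmono : Lmax p (σ u) ≤ Lmax p (σ (t1+1)) := by
              have := Lmax_mono_range σ I I' Af Bf (t1+1) t2
                (fun w hw hw2 => hsw w (by omega) hw2) u hu (by omega)
              exact this
            rw [hsu.1, hI'u, hload] at himpu
            have : Lmax p (σ u) - ℓ < δ := by
              have := ht1'
              rw [← hℓdef] at this
              linarith
            linarith
          · right
            constructor
            · intro j hj
              have hτ : σ u j = I' t1 := hjobs j hj
              have hjA : j ∉ Af u := by
                intro hjA
                exact hIu (((hsu.2.2.2.1 j hjA).symm.trans hτ))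
              have hjB : j ∉ Bf u := by
                intro hjB
                exact hI'u (((hsu.2.2.2.2.1 j hjB).symm.trans hτ))
              rw [hsu.2.2.2.2.2.2.2.2.2.2.2 j hjA hjB]
              exact hτ
            · rw [swap_load_other hsu (I' t1) (fun h => hIu h.symm) (fun h => hI'u h.symm)]
              exact hload
  have hores : Lmax p (σ t2) ≤ ℓ := by
    rcases hkey t2 (by omega) le_rfl with hdone | ⟨hjobs, hload⟩
    · exact hdone
    · have hcard : 1 ≤ (Af t1).card := hs1.2.2.2.2.2.1
      obtain ⟨j, hj⟩ := Finset.card_pos.mp hcard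
      have hj2 : j ∈ Af t2 := hA ▸ hj
      have h1 : σ t2 j = I t2 := hs2.2.2.2.1 j hj2
      have h2 : σ t2 j = I' t1 := hjobs j hj
      have hIt2 : I t2 = I' t1 := h1.symm.trans h2
      rw [← hv2, hIt2, hload]
  -- basic strict inequalities
  have hb2b1 : b2 < b1 := by
    have : b2 < Lmax p (σ t2) - Δ := by linarith
    rw [hℓval] at hores
    linarith
  have hδpos : 0 < Δ := hs1.2.2.2.2.2.2.2.1
  have hv2b2 : δ < Lmax p (σ t2) - b2 := lt_of_le_of_lt hδΔ himp2
  -- Step C : crossing lemma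
  have hcross : ∀ u, t1 ≤ u → u ≤ t2 →
      (Finset.univ.filter fun x => load p (σ u) x ≤ b2).card
        ≤ (Finset.univ.filter fun x => load p (σ t1) x ≤ b2).card := by
    intro u hu hu2
    induction u, hu using Nat.le_induction with
    | base => exact le_rfl
    | succ u hu ih =>
      have hu2' : u ≤ t2 := by omega
      refine le_trans ?_ (ih hu2')
      -- one step
      have hsu := hsw u hu hu2'
      have hmono2 : Lmax p (σ t2) ≤ Lmax p (σ (u+1)) := by
        have := Lmax_mono_range σ I I' Af Bf (u+1) t2
          (fun w hw hw2 => hsw w (by omega) hw2) t2 (by omega) (by omega)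
        exact this
      have hmono0 : Lmax p (σ t2) ≤ Lmax p (σ u) := by
        have := Lmax_mono_range σ I I' Af Bf u t2
          (fun w hw hw2 => hsw w (by omega) hw2) t2 hu2' (by omega)
        exact this
      have htgt : b2 < load p (σ (u+1)) (I' u) := by
        have h1 := htype1 u hu (by omega)
        linarith
      have hsrc0 : b2 < load p (σ u) (I u) := by
        rw [hsu.1]
        linarith
      by_cases hcase : load p (σ (u+1)) (I u) ≤ b2
      · -- source dives below b2 : target was below b2 before
        have hImem : I' u ∈ Finset.univ.filter fun x => load p (σ u) x ≤ b2 := by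
          have himpu := hsu.2.2.2.2.2.2.2.2.1
          have hsrcnew : load p (σ (u+1)) (I u)
              = load p (σ u) (I u) - ((∑ j ∈ Af u, p j) - ∑ j ∈ Bf u, p j) :=
            swap_load_src hsu
          simp only [Finset.mem_filter, Finset.mem_univ, true_and]
          linarith [hcase, hsrcnew ▸ hcase]
        have hsub : (Finset.univ.filter fun x => load p (σ (u+1)) x ≤ b2)
            ⊆ insert (I u) ((Finset.univ.filter fun x => load p (σ u) x ≤ b2).erase (I' u)) := by
          intro x hx
          simp only [Finset.mem_filter, Finset.mem_univ, true_and] at hx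
          by_cases hxI : x = I u
          · exact hxI ▸ Finset.mem_insert_self _ _
          · by_cases hxI' : x = I' u
            · exfalso; rw [hxI'] at hx; linarith
            · apply Finset.mem_insert_of_mem
              rw [Finset.mem_erase]
              refine ⟨hxI', ?_⟩
              simp only [Finset.mem_filter, Finset.mem_univ, true_and]
              rw [← swap_load_other hsu x hxI hxI']
              exact hx
        calc (Finset.univ.filter fun x => load p (σ (u+1)) x ≤ b2).card
            ≤ (insert (I u) ((Finset.univ.filter fun x => load p (σ u) x ≤ b2).erase (I' u))).card :=
              Finset.card_le_card hsub
          _ ≤ ((Finset.univ.filter fun x => load p (σ u) x ≤ b2).erase (I' u)).card + 1 :=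
              Finset.card_insert_le _ _
          _ = (Finset.univ.filter fun x => load p (σ u) x ≤ b2).card - 1 + 1 := by
              rw [Finset.card_erase_of_mem hImem]
          _ ≤ (Finset.univ.filter fun x => load p (σ u) x ≤ b2).card := by
              have : 1 ≤ (Finset.univ.filter fun x => load p (σ u) x ≤ b2).card :=
                Finset.card_pos.mpr ⟨I' u, hImem⟩
              omega
      · apply Finset.card_le_card
        intro x hx
        simp only [Finset.mem_filter, Finset.mem_univ, true_and] at hx ⊢
        by_cases hxI : x = I u
        · exact absurd (hxI ▸ hx) hcase
        · by_cases hxI' : x = I' u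
          · exfalso; rw [hxI'] at hx; linarith
          · rw [← swap_load_other hsu x hxI hxI']
            exact hx
  -- Step D : conclude
  have hN : (Finset.univ.filter fun x => load p (σ t2) x ≤ b2).card
      ≤ (Finset.univ.filter fun x => load p (σ t1) x ≤ b2).card :=
    hcross t2 h12.le le_rfl
  have hstrict : (Finset.univ.filter fun x => load p (σ t1) x ≤ b2).card
      < (Finset.univ.filter fun x => load p (σ t1) x ≤ b1).card := by
    apply Finset.card_lt_card
    rw [Finset.ssubset_iff_of_subset]
    · exact ⟨I' t1, by simp [Finset.mem_filter, hb1def], by simp [Finset.mem_filter]; linarith⟩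
    · intro x hx
      simp only [Finset.mem_filter, Finset.mem_univ, true_and] at hx ⊢
      linarith
  exact lt_of_le_of_lt hN hstrict

end Window

/-- If additionally all processing times are at most `1`, then any sequence of schedules
in which every step is an improving `k`-swap has length at most
`(m·n / (2·δ_min) + 1) · (m·N + 1)`, where `N` is the number of admissible ordered pairs
`(A, B)` of job sets. -/
theorem kswap_sequence_length_le {n m k : ℕ} (hm : 2 ≤ m) (hk : 1 ≤ k)
    (p : Fin n → ℝ) (hp : ∀ j, 0 < p j) (hp1 : ∀ j, p j ≤ 1)
    (hδ : 0 < deltaMin n k p)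
    (T : ℕ) (σ : ℕ → Fin n → Fin m)
    (hsteps : ∀ t < T, ∃ (i i' : Fin m) (A B : Finset (Fin n)),
      IsImprovingKSwap k p (σ t) (σ (t + 1)) i i' A B) :
    (T : ℝ) ≤ ((m : ℝ) * (n : ℝ) / (2 * deltaMin n k p) + 1) *
      ((m : ℝ) * (numPairs n k : ℝ) + 1) := by
  classical
  have hm0 : 0 < m := by omega
  have : Nonempty (Fin m) := ⟨⟨0, hm0⟩⟩
  set δ := deltaMin n k p with hδdef
  -- total witness functions
  have hch : ∀ t : ℕ, ∃ q : Fin m × Fin m × Finset (Fin n) × Finset (Fin n),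
      t < T → IsImprovingKSwap k p (σ t) (σ (t+1)) q.1 q.2.1 q.2.2.1 q.2.2.2 := by
    intro t
    by_cases h : t < T
    · obtain ⟨i, i', A, B, hs⟩ := hsteps t h
      exact ⟨⟨i, i', A, B⟩, fun _ => hs⟩
    · exact ⟨⟨⟨0, hm0⟩, ⟨0, hm0⟩, ∅, ∅⟩, fun h' => absurd h' h⟩
  choose qf hq using hch
  set I : ℕ → Fin m := fun t => (qf t).1 with hIdef
  set I' : ℕ → Fin m := fun t => (qf t).2.1 with hI'def
  set Af : ℕ → Finset (Fin n) := fun t => (qf t).2.2.1 with hAfdef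
  set Bf : ℕ → Finset (Fin n) := fun t => (qf t).2.2.2 with hBfdef
  have hsw : ∀ t, t < T → IsImprovingKSwap k p (σ t) (σ (t+1)) (I t) (I' t) (Af t) (Bf t) :=
    fun t ht => hq t ht
  -- type-1 predicate
  set P1 : ℕ → Prop := fun t => Lmax p (σ (t+1)) - δ < load p (σ (t+1)) (I' t) with hP1def
  set E : Finset ℕ := (Finset.range T).filter (fun t => ¬ P1 t) with hEdef
  set T1 : Finset ℕ := (Finset.range T).filter (fun t => P1 t) with hT1def
  -- Potential telescope : count of type-2 steps
  have hphi : ∀ s, s ≤ T → potential p (σ s) + 4 * δ * (((Finset.range s).filter (fun t => ¬ P1 t)).card : ℝ)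
      ≤ potential p (σ 0) := by
    intro s
    induction s with
    | zero => intro _; simp
    | succ s ih =>
      intro hsT
      have hstep : s < T := by omega
      have hs := hsw s hstep
      have hΔpos : (0:ℝ) < (∑ j ∈ Af s, p j) - ∑ j ∈ Bf s, p j := hs.2.2.2.2.2.2.2.1
      have himp := hs.2.2.2.2.2.2.2.2.1
      have hcount : (((Finset.range (s+1)).filter (fun t => ¬ P1 t)).card : ℝ)
          = (((Finset.range s).filter (fun t => ¬ P1 t)).card : ℝ) + (if ¬ P1 s then 1 else 0) := by
        rw [Finset.range_add_one, Finset.filter_insert]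
        by_cases h : P1 s
        · simp [h]
        · rw [if_pos h, Finset.card_insert_of_notMem (by simp)]
          simp [h]
      by_cases h2 : P1 s
      · -- type-1 : potential non-increasing
        have hdrop : potential p (σ (s+1)) ≤ potential p (σ s) - 4 * 0 :=
          potential_step hs 0 le_rfl hΔpos.le (by linarith)
        have := ih (by omega)
        rw [hcount]
        simp only [h2, not_true, if_neg (not_not_intro h2)]
        push_cast
        linarith
      · -- type-2 : potential drops by 4δ
        have hmargin : δ ≤ (load p (σ s) (I s) - load p (σ s) (I' s))
            - ((∑ j ∈ Af s, p j) - ∑ j ∈ Bf s, p j) := by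
          have hle : load p (σ (s+1)) (I' s) ≤ Lmax p (σ (s+1)) - δ := not_lt.mp h2
          have htgt : load p (σ (s+1)) (I' s)
              = load p (σ s) (I' s) + ((∑ j ∈ Af s, p j) - ∑ j ∈ Bf s, p j) :=
            swap_load_tgt hs
          have hLle : Lmax p (σ (s+1)) ≤ Lmax p (σ s) := swap_Lmax_le hs
          have hcrit : load p (σ s) (I s) = Lmax p (σ s) := hs.1
          linarith
        have hdrop : potential p (σ (s+1)) ≤ potential p (σ s) - 4 * δ :=
          potential_step hs δ hδ.le (le_trans (deltaMin_le_swap hs) le_rfl) hmargin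
        have := ih (by omega)
        rw [hcount]
        rw [if_pos h2]
        push_cast
        linarith
  have hE4 : 4 * δ * (E.card : ℝ) ≤ 2 * m * n := by
    have h1 := hphi T le_rfl
    have h2 : 0 ≤ potential p (σ T) := potential_nonneg p (σ T)
    have h3 : potential p (σ 0) ≤ 2 * m * n := potential_le_two_mn hp hp1 (σ 0)
    rw [hEdef]
    linarith
  have hEb : (E.card : ℝ) ≤ (m : ℝ) * n / (2 * δ) := by
    rw [le_div_iff₀ (by linarith : (0:ℝ) < 2 * δ)]
    linarith
  -- Injection for type-1 steps
  set pairsF : Finset (Finset (Fin n) × Finset (Fin n)) :=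
    (Finset.univ.filter
      (fun AB : Finset (Fin n) × Finset (Fin n) =>
        Disjoint AB.1 AB.2 ∧ 1 ≤ AB.1.card ∧ AB.1.card + AB.2.card ≤ k)) with hpairsFdef
  have hNval : pairsF.card = numPairs n k := rfl
  set W : ℕ → ℕ := fun t =>
    (Finset.univ.filter fun x => load p (σ t) x ≤ load p (σ t) (I' t)).card with hWdef
  set key : ℕ → ℕ × ((Finset (Fin n) × Finset (Fin n)) × ℕ) :=
    fun t => ((E.filter (fun u => u < t)).card, ((Af t, Bf t), W t)) with hkeydef
  set S : Finset (ℕ × ((Finset (Fin n) × Finset (Fin n)) × ℕ)) :=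
    (Finset.range (E.card + 1)) ×ˢ (pairsF ×ˢ Finset.Icc 1 m) with hSdef
  have hmaps : ∀ t ∈ T1, key t ∈ S := by
    intro t ht
    have htT : t < T := Finset.mem_range.mp (Finset.mem_filter.mp ht).1
    have hs := hsw t htT
    simp only [hkeydef, hSdef, hWdef, hpairsFdef, Finset.mem_product]
    refine ⟨?_, ?_, ?_⟩
    · rw [Finset.mem_range]
      have h1 : (E.filter (fun u => u < t)) ⊆ E := Finset.filter_subset _ _
      have := Finset.card_le_card h1
      omega
    · rw [Finset.mem_filter]
      exact ⟨Finset.mem_univ _, hs.2.2.1, hs.2.2.2.2.2.1,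
        hs.2.2.2.2.2.2.1⟩
    · rw [Finset.mem_Icc]
      constructor
      · refine Finset.card_pos.mpr ⟨I' t, ?_⟩
        simp
      · calc (Finset.univ.filter fun x => load p (σ t) x ≤ load p (σ t) (I' t)).card
            ≤ (Finset.univ : Finset (Fin m)).card := Finset.card_filter_le _ _
          _ = m := by simp
  have hinj : Set.InjOn key T1 := by
    intro t ht t' ht' hkey
    by_contra hne
    -- wlog t < t'
    have hmain : ∀ a b : ℕ, a ∈ T1 → b ∈ T1 → key a = key b → a < b → False := by
      intro a b ha hb hk hab
      have haT : a < T := Finset.mem_range.mp (Finset.mem_filter.mp ha).1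
      have hbT : b < T := Finset.mem_range.mp (Finset.mem_filter.mp hb).1
      have hcEq : (E.filter (fun u => u < a)).card = (E.filter (fun u => u < b)).card :=
        congrArg Prod.fst hk
      have hAB : Af a = Af b ∧ Bf a = Bf b := by
        have := congrArg (fun z => z.2.1) hk
        exact ⟨congrArg Prod.fst this, congrArg Prod.snd this⟩
      have hWeq : W a = W b := congrArg (fun z => z.2.2) hk
      -- all steps in [a, b) are type-1
      have hall : ∀ u, a ≤ u → u < b → P1 u := by
        intro u hua hub
        by_contra hnot
        have huE : u ∈ E := by
          rw [hEdef, Finset.mem_filter, Finset.mem_range]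
          exact ⟨by omega, hnot⟩
        have hsub : (E.filter (fun v => v < a)) ⊆ (E.filter (fun v => v < b)) :=
          Finset.monotone_filter_right E (fun v _ (hv : v < a) => by omega)
        have hss : (E.filter (fun v => v < a)) ⊂ (E.filter (fun v => v < b)) :=
          (Finset.ssubset_iff_of_subset hsub).mpr
            ⟨u, by rw [Finset.mem_filter]; exact ⟨huE, by omega⟩,
              by rw [Finset.mem_filter]; push_neg; intro _; omega⟩
        exact absurd hcEq (Nat.ne_of_lt (Finset.card_lt_card hss))
      -- apply the window lemma
      have hwin := window_W_lt σ I I' Af Bf a b hab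
        (fun u hu hu2 => hsw u (by omega))
        (fun u hu hu2 => hall u hu hu2)
        hAB.1 hAB.2
      simp only [hWdef] at hWeq
      omega
    rcases Nat.lt_trichotomy t t' with h | h | h
    · exact hmain t t' ht ht' hkey h
    · exact hne h
    · exact hmain t' t ht' ht hkey.symm h
  have hT1card : T1.card ≤ (E.card + 1) * (numPairs n k * m) := by
    have h1 : T1.card ≤ S.card := Finset.card_le_card_of_injOn key hmaps hinj
    have h2 : S.card = (E.card + 1) * (numPairs n k * m) := by
      rw [hSdef, Finset.card_product, Finset.card_product, Finset.card_range,
        hNval, Nat.card_Icc]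
      simp
    omega
  -- assemble
  have hTsplit : E.card + T1.card = T := by
    rw [hEdef, hT1def]
    have hdisj : Disjoint ((Finset.range T).filter (fun t => ¬ P1 t))
        ((Finset.range T).filter (fun t => P1 t)) := by
      rw [Finset.disjoint_left]
      intro t ht1 ht2
      exact (Finset.mem_filter.mp ht1).2 (Finset.mem_filter.mp ht2).2
    have hunion : ((Finset.range T).filter (fun t => ¬ P1 t))
        ∪ ((Finset.range T).filter (fun t => P1 t)) = Finset.range T := by
      ext t
      simp only [Finset.mem_union, Finset.mem_filter]
      tauto
    rw [← Finset.card_union_of_disjoint hdisj, hunion, Finset.card_range]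
  have hcast : (T : ℝ) ≤ (E.card : ℝ) + ((E.card : ℝ) + 1) * ((numPairs n k : ℝ) * m) := by
    have := hT1card
    have h0 : (T1.card : ℝ) ≤ ((E.card : ℝ) + 1) * ((numPairs n k : ℝ) * m) := by
      exact_mod_cast Nat.cast_le.mpr this
    have h1 : (E.card : ℝ) + (T1.card : ℝ) = (T : ℝ) := by exact_mod_cast hTsplit
    linarith
  have hNm0 : (0:ℝ) ≤ (m : ℝ) * (numPairs n k : ℝ) := by positivity
  have hfin : ((E.card : ℝ) + 1) ≤ (m : ℝ) * n / (2 * δ) + 1 := by linarith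
  calc (T : ℝ) ≤ (E.card : ℝ) + ((E.card : ℝ) + 1) * ((numPairs n k : ℝ) * m) := hcast
    _ = ((E.card : ℝ) + 1) * ((m : ℝ) * (numPairs n k : ℝ) + 1) - 1 := by ring
    _ ≤ ((m : ℝ) * n / (2 * δ) + 1) * ((m : ℝ) * (numPairs n k : ℝ) + 1) - 1 := by
        have := mul_le_mul_of_nonneg_right hfin (by linarith : (0:ℝ) ≤ (m : ℝ) * (numPairs n k : ℝ) + 1)
        linarith
    _ ≤ ((m : ℝ) * n / (2 * δ) + 1) * ((m : ℝ) * (numPairs n k : ℝ) + 1) := by linarith
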